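/- (Correctness of the prefix–suffix payment computation.) Let agents 1, …, n have valuation functions V_1, …, V_n, let m be a cap vector, and fix j ∈ {1, …, n}. Let F be the join of the prefix V_1 ⊕ ⋯ ⊕ V_{j−1} and let B be the join of the suffix V_{j+1} ⊕ ⋯ ⊕ V_n (where an empty join is the zero function). Then max_{a ≤ m} (F ⊕ B)(a) = OPT({1, …, n} \ {j}, m), the maximal social welfare achievable when agent j is excluded from the auction. -/

import Mathlib

/-- An allocation `A` for the agents in `G` is *valid* with cap `m` if the
element-wise sum of the allocated vectors does not exceed `m`. -/
def Valid (R : ℕ) {ι : Type*} (G : Finset ι) (m : Fin R → ℕ)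
    (A : ι → Fin R → ℕ) : Prop :=
  ∑ i ∈ G, A i ≤ m

/-- The social welfare of the allocation `A` on the agent set `G`. -/
def SW (R : ℕ) {ι : Type*} (V : ι → (Fin R → ℕ) → ℝ) (G : Finset ι)
    (A : ι → Fin R → ℕ) : ℝ :=
  ∑ i ∈ G, V i (A i)

/-- `OPT R V G m` : the maximal social welfare over all valid allocations
for the agents in `G` with cap `m`. -/
noncomputable def OPT (R : ℕ) {ι : Type*} (V : ι → (Fin R → ℕ) → ℝ)
    (G : Finset ι) (m : Fin R → ℕ) : ℝ :=
  sSup {w : ℝ | ∃ A : ι → Fin R → ℕ, Valid R G m A ∧ SW R V G A = w}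

/-- The joint valuation of `V` and `W`:
`(V ⊕ W)(a) = max_{b ≤ a} (V b + W (a - b))` (truncated subtraction). -/
noncomputable def join (R : ℕ) (V W : (Fin R → ℕ) → ℝ) : (Fin R → ℕ) → ℝ :=
  fun a => sSup {w : ℝ | ∃ b ≤ a, V b + W (a - b) = w}

/-- The iterated join `V₁ ⊕ V₂ ⊕ ⋯ ⊕ Vₙ` of a list of valuation functions
(the empty join is the zero function). -/
noncomputable def joinIter (R : ℕ) :
    List ((Fin R → ℕ) → ℝ) → ((Fin R → ℕ) → ℝ)
  | [] => fun _ => 0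
  | V :: rest => rest.foldl (join R) V

/-! Let `P_G(x)` be the best welfare of the agents in `G` when their bundles add up to exactly
`x` (`exactOPT` below). Splitting an allocation of `G₁ ∪ G₂` into its parts on `G₁` and on `G₂`
shows `P_{G₁} ⊕ P_{G₂} = P_{G₁ ∪ G₂}` for disjoint nonempty `G₁, G₂`, and `P_{i} = V_i`; so by
induction the prefix and suffix joins are `P` of the prefix and suffix agents. Maximizing
`P_{G₁} ⊕ P_{G₂}` over `a ≤ m` then ranges over all allocations of `G₁ ∪ G₂` with sum at most
`m`, which gives `OPT`. -/

section MaxOverIic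

variable {α : Type*} [Preorder α] (f : α → ℝ)

lemma le_sSup_image_Iic [LocallyFiniteOrderBot α] {a b : α} (h : b ≤ a) :
    f b ≤ sSup (f '' Set.Iic a) :=
  le_csSup ((Set.finite_Iic a).image f).bddAbove ⟨b, h, rfl⟩

lemma sSup_image_Iic_le {a : α} {c : ℝ} (h : ∀ b ≤ a, f b ≤ c) : sSup (f '' Set.Iic a) ≤ c :=
  csSup_le ⟨f a, a, le_rfl, rfl⟩ (by rintro _ ⟨b, hb, rfl⟩; exact h b hb)

end MaxOverIic

section Welfare

variable {R : ℕ}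

lemma le_join (F B : (Fin R → ℕ) → ℝ) {a b : Fin R → ℕ} (hb : b ≤ a) :
    F b + B (a - b) ≤ join R F B a :=
  le_sSup_image_Iic (fun b => F b + B (a - b)) hb

lemma join_le {F B : (Fin R → ℕ) → ℝ} {a : Fin R → ℕ} {c : ℝ}
    (h : ∀ b ≤ a, F b + B (a - b) ≤ c) : join R F B a ≤ c :=
  sSup_image_Iic_le (fun b => F b + B (a - b)) h

variable {ι : Type*} (V : ι → (Fin R → ℕ) → ℝ)

lemma finite_image_SW (G : Finset ι) {S : Set (ι → Fin R → ℕ)} (x : Fin R → ℕ)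
    (hS : ∀ A ∈ S, ∀ i ∈ G, A i ≤ x) : (SW R V G '' S).Finite := by
  refine ((Set.Finite.pi' (ι := G) fun _ => Set.finite_Iic x).image
    fun B => ∑ i : G, V i (B i)).subset ?_
  rintro _ ⟨A, hA, rfl⟩
  exact ⟨fun i => A i, fun i => hS A hA i i.2, Finset.sum_coe_sort G fun i => V i (A i)⟩

lemma le_OPT {G : Finset ι} {m : Fin R → ℕ} {A : ι → Fin R → ℕ} (hA : Valid R G m A) :
    SW R V G A ≤ OPT R V G m := by
  refine le_csSup (finite_image_SW V G m ?_).bddAbove ⟨A, hA, rfl⟩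
  exact fun A hA i hi => (Finset.single_le_sum_of_canonicallyOrdered hi).trans hA

lemma OPT_le {G : Finset ι} {m : Fin R → ℕ} {c : ℝ}
    (h : ∀ A, Valid R G m A → SW R V G A ≤ c) : OPT R V G m ≤ c :=
  csSup_le ⟨_, 0, by simp [Valid], rfl⟩ (by rintro _ ⟨A, hA, rfl⟩; exact h A hA)

/-- For `G = ∅` and `x ≠ 0` no allocation qualifies and `sSup ∅ = 0`, so `exactOPT V ∅ = 0`,
which is also the empty join. -/
noncomputable def exactOPT (G : Finset ι) (x : Fin R → ℕ) : ℝ :=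
  sSup (SW R V G '' {A | ∑ i ∈ G, A i = x})

lemma le_exactOPT {G : Finset ι} {x : Fin R → ℕ} {A : ι → Fin R → ℕ} (hA : ∑ i ∈ G, A i = x) :
    SW R V G A ≤ exactOPT V G x := by
  refine le_csSup (finite_image_SW V G x ?_).bddAbove ⟨A, hA, rfl⟩
  exact fun A hA i hi => hA ▸ Finset.single_le_sum_of_canonicallyOrdered hi

lemma exists_SW_eq_exactOPT {G : Finset ι} (hG : G.Nonempty) (x : Fin R → ℕ) :
    ∃ A : ι → Fin R → ℕ, ∑ i ∈ G, A i = x ∧ SW R V G A = exactOPT V G x := by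
  classical
  obtain ⟨i₀, hi₀⟩ := hG
  have hne : (SW R V G '' {A | ∑ i ∈ G, A i = x}).Nonempty :=
    ⟨_, Pi.single i₀ x, by simp [Finset.sum_pi_single', hi₀], rfl⟩
  exact hne.csSup_mem <|
    finite_image_SW V G x fun A hA i hi => hA ▸ Finset.single_le_sum_of_canonicallyOrdered hi

lemma exactOPT_empty : exactOPT V ∅ = 0 := by
  funext x
  have hSW : SW R V ∅ = 0 := funext fun _ => Finset.sum_empty
  by_cases hx : x = 0
  · simp [exactOPT, hSW, hx]
  · simp [exactOPT, Ne.symm hx]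

lemma exists_SW_ge_exactOPT (G : Finset ι) (x : Fin R → ℕ) :
    ∃ A : ι → Fin R → ℕ, ∑ i ∈ G, A i ≤ x ∧ exactOPT V G x ≤ SW R V G A := by
  rcases G.eq_empty_or_nonempty with rfl | hG
  · exact ⟨0, by simp, by simp [exactOPT_empty, SW]⟩
  · obtain ⟨A, hsum, hSW⟩ := exists_SW_eq_exactOPT V hG x
    exact ⟨A, hsum.le, hSW.ge⟩

lemma exactOPT_singleton [DecidableEq ι] (i : ι) : exactOPT V {i} = V i := by
  funext x
  refine le_antisymm (csSup_le ⟨V i x, fun _ => x, Finset.sum_singleton _ i, by simp [SW]⟩ ?_) ?_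
  · rintro _ ⟨A, hA, rfl⟩
    simp_all [SW]
  · simpa [SW] using le_exactOPT V (A := fun _ => x) (Finset.sum_singleton _ i)

section Disjoint

variable [DecidableEq ι] {G₁ G₂ : Finset ι}

lemma sum_union_piecewise {β M : Type*} [AddCommMonoid M] (hd : Disjoint G₁ G₂)
    (f : ι → β → M) (A₁ A₂ : ι → β) :
    ∑ i ∈ G₁ ∪ G₂, f i (G₁.piecewise A₁ A₂ i) = ∑ i ∈ G₁, f i (A₁ i) + ∑ i ∈ G₂, f i (A₂ i) := by
  rw [Finset.sum_union hd]
  congr 1 <;> refine Finset.sum_congr rfl fun i hi => ?_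
  · rw [Finset.piecewise_eq_of_mem _ _ _ hi]
  · rw [Finset.piecewise_eq_of_notMem _ _ _ (Finset.disjoint_right.mp hd hi)]

lemma SW_le_join_exactOPT (hd : Disjoint G₁ G₂) (A : ι → Fin R → ℕ) :
    SW R V (G₁ ∪ G₂) A ≤ join R (exactOPT V G₁) (exactOPT V G₂) (∑ i ∈ G₁ ∪ G₂, A i) := by
  rw [Finset.sum_union hd]
  calc SW R V (G₁ ∪ G₂) A = SW R V G₁ A + SW R V G₂ A := Finset.sum_union hd
    _ ≤ exactOPT V G₁ (∑ i ∈ G₁, A i)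
          + exactOPT V G₂ ((∑ i ∈ G₁, A i + ∑ i ∈ G₂, A i) - ∑ i ∈ G₁, A i) :=
      add_le_add (le_exactOPT V rfl) (le_exactOPT V (add_tsub_cancel_left _ _).symm)
    _ ≤ _ := le_join _ _ le_self_add

lemma join_exactOPT (h₁ : G₁.Nonempty) (h₂ : G₂.Nonempty) (hd : Disjoint G₁ G₂) :
    join R (exactOPT V G₁) (exactOPT V G₂) = exactOPT V (G₁ ∪ G₂) := by
  funext a
  refine le_antisymm (join_le fun b hb => ?_) ?_
  · obtain ⟨A₁, hsum₁, hSW₁⟩ := exists_SW_eq_exactOPT V h₁ b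
    obtain ⟨A₂, hsum₂, hSW₂⟩ := exists_SW_eq_exactOPT V h₂ (a - b)
    have hsum : ∑ i ∈ G₁ ∪ G₂, G₁.piecewise A₁ A₂ i = a := by
      rw [sum_union_piecewise hd (fun _ b => b), hsum₁, hsum₂, add_tsub_cancel_of_le hb]
    rw [← hSW₁, ← hSW₂, SW, SW, ← sum_union_piecewise hd]
    exact le_exactOPT V hsum
  · obtain ⟨A, hsum, hSW⟩ := exists_SW_eq_exactOPT V (h₁.mono Finset.subset_union_left) a
    rw [← hSW, ← hsum]
    exact SW_le_join_exactOPT V hd A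

lemma sSup_join_exactOPT (hd : Disjoint G₁ G₂) (m : Fin R → ℕ) :
    sSup {w : ℝ | ∃ a ≤ m, join R (exactOPT V G₁) (exactOPT V G₂) a = w} =
      OPT R V (G₁ ∪ G₂) m := by
  refine le_antisymm (sSup_image_Iic_le _ fun a ham => join_le fun b hb => ?_) ?_
  · obtain ⟨A₁, hsum₁, hSW₁⟩ := exists_SW_ge_exactOPT V G₁ b
    obtain ⟨A₂, hsum₂, hSW₂⟩ := exists_SW_ge_exactOPT V G₂ (a - b)
    have hValid : Valid R (G₁ ∪ G₂) m (G₁.piecewise A₁ A₂) := by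
      rw [Valid, sum_union_piecewise hd (fun _ b => b)]
      calc _ ≤ b + (a - b) := add_le_add hsum₁ hsum₂
        _ = a := add_tsub_cancel_of_le hb
        _ ≤ m := ham
    calc _ ≤ SW R V G₁ A₁ + SW R V G₂ A₂ := add_le_add hSW₁ hSW₂
      _ = SW R V (G₁ ∪ G₂) (G₁.piecewise A₁ A₂) := (sum_union_piecewise hd V A₁ A₂).symm
      _ ≤ _ := le_OPT V hValid
  · exact OPT_le V fun A hA =>
      (SW_le_join_exactOPT V hd A).trans (le_sSup_image_Iic _ hA)

end Disjoint

lemma foldl_join_exactOPT [DecidableEq ι] {G : Finset ι} (hG : G.Nonempty) {l : List ι}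
    (hl : l.Nodup) (hGl : ∀ i ∈ l, i ∉ G) :
    (l.map V).foldl (join R) (exactOPT V G) = exactOPT V (G ∪ l.toFinset) := by
  induction l generalizing G with
  | nil => simp
  | cons i l ih =>
    obtain ⟨hil, hl⟩ := List.nodup_cons.mp hl
    have hGl' : ∀ k ∈ l, k ∉ G ∪ {i} := fun k hk => by
      simpa [hGl k (List.mem_cons_of_mem i hk)] using ne_of_mem_of_not_mem hk hil
    rw [List.map_cons, List.foldl_cons, ← exactOPT_singleton V i,
      join_exactOPT V hG (Finset.singleton_nonempty i)
        (Finset.disjoint_singleton_right.mpr (hGl i List.mem_cons_self)),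
      ih (hG.mono Finset.subset_union_left) hl hGl', List.toFinset_cons, Finset.insert_eq,
      Finset.union_assoc]

lemma joinIter_map [DecidableEq ι] {l : List ι} (hl : l.Nodup) :
    joinIter R (l.map V) = exactOPT V l.toFinset := by
  cases l with
  | nil => exact (exactOPT_empty V).symm
  | cons i l =>
    obtain ⟨hil, hl⟩ := List.nodup_cons.mp hl
    rw [List.map_cons, joinIter, ← exactOPT_singleton V i,
      foldl_join_exactOPT V (Finset.singleton_nonempty i) hl
        fun k hk => Finset.notMem_singleton.mpr (ne_of_mem_of_not_mem hk hil),
      List.toFinset_cons, Finset.insert_eq]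

theorem sSup_join_joinIter_take_drop [DecidableEq ι] {l : List ι} (hl : l.Nodup) {j : ℕ}
    (hj : j < l.length) (m : Fin R → ℕ) :
    sSup {w : ℝ | ∃ a ≤ m,
        join R (joinIter R ((l.map V).take j)) (joinIter R ((l.map V).drop (j + 1))) a = w} =
      OPT R V (l.toFinset.erase l[j]) m := by
  have hsplit : l.take j ++ l.drop (j + 1) = l.erase l[j] := by
    rw [hl.erase_getElem, List.eraseIdx_eq_take_drop_succ]
  have hnd : (l.take j ++ l.drop (j + 1)).Nodup := hsplit ▸ hl.erase _
  rw [← List.map_take, ← List.map_drop, joinIter_map V hnd.of_append_left,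
    joinIter_map V hnd.of_append_right,
    sSup_join_exactOPT V (List.disjoint_toFinset_iff_disjoint.mpr
      (List.disjoint_of_nodup_append hnd)), ← List.toFinset_append, hsplit]
  congr 1
  ext i
  simp [hl.mem_erase_iff]

end Welfare

/-- Correctness of the prefix–suffix payment computation: joining the prefix
join `F = V₁ ⊕ ⋯ ⊕ V_{j-1}` with the suffix join `B = V_{j+1} ⊕ ⋯ ⊕ Vₙ` and
maximizing over allocation vectors bounded by `m` yields the maximal social
welfare achievable when agent `j` is excluded. -/
theorem prefix_suffix_payment (R n : ℕ) (V : Fin n → (Fin R → ℕ) → ℝ)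
    (m : Fin R → ℕ) (j : Fin n) :
    sSup {w : ℝ | ∃ a ≤ m,
        join R (joinIter R ((List.ofFn V).take (j : ℕ)))
               (joinIter R ((List.ofFn V).drop ((j : ℕ) + 1))) a = w} =
      OPT R V ((Finset.univ : Finset (Fin n)).erase j) m := by
  simpa [← List.ofFn_eq_map] using
    sSup_join_joinIter_take_drop V (List.nodup_finRange n) (j := j) (by simp) m
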